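/- arXiv:1310.5553 — 2 statements merged into one kernel-verified Lean document; each statement's English description precedes it below -/
import Mathlib

section
/- Kostka positivity criterion via doubly stochastic matrices: Let d ≥ 1, n ≥ 1, let λ be a Young diagram with n cells and at most d rows and let f : Fin d → ℕ with Σ_i f i = n. Then there exists a semistandard Young tableau of shape λ with content f if and only if there exists a doubly stochastic matrix D (real d×d, nonnegative entries, all row and column sums equal 1) such that f i = Σ_j D i j · λ.rowLen j for every i. -/
/-!
Both sides are equivalent to the dominance of `f` by `λ`: any `k` letters occur at most
`λ₀ + ⋯ + λ_{k-1}` times in total.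

A semistandard tableau holds each letter at most once per column, so the cells carrying `k`
given letters fit, column by column, into the first `k` rows. Conversely, removing a horizontal
strip of `f (d - 1)` cells, as many from each row as there are bottom cells of the first
`f (d - 1)` columns in it, preserves dominance for the remaining letters; so a tableau is built
by induction on `d`, the last letter filling the strip.

If `f = D λ` with `D` doubly stochastic, the sum of `f` over `k` letters weights `λ` by
coefficients in `[0, 1]` of total `k`, hence is at most the sum of the `k` largest rows.
Conversely (Rado), if `f` lay outside the compact convex set `{D λ}`, a separating functional
`c` would satisfy `∑ cᵢ fᵢ < ∑ cᵢ λ_{σ i}` for every permutation `σ`; pairing the increasing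
rearrangement of `c` with the decreasing `λ` and summing by parts contradicts dominance.
-/

open Matrix
open scoped ComplexOrder

noncomputable section

/-- A density matrix on `ℂ^d`: positive semidefinite with trace one. -/
def IsDensityMatrix {d : ℕ} (ρ : Matrix (Fin d) (Fin d) ℂ) : Prop :=
  ρ.PosSemidef ∧ ρ.trace = 1

/-- A semistandard Young tableau of shape `μ` has content `f : Fin d → ℕ` if all its entries
on the cells of `μ` are `< d` and the entry `i` occurs exactly `f i` times.  The Kostka number
`K_{f,μ}` is positive iff such a tableau exists. -/
def HasContent {d : ℕ} (μ : YoungDiagram) (f : Fin d → ℕ) : Prop :=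
  ∃ T : SemistandardYoungTableau μ,
    (∀ c ∈ μ.cells, T c.1 c.2 < d) ∧
    ∀ i : Fin d, (μ.cells.filter fun c => T c.1 c.2 = (i : ℕ)).card = f i

open Finset

/-- Quantifying over all `k`-subsets avoids sorting `f`: the largest sum over `k` letters is that
of the `k` largest values, so this is dominance of the decreasing rearrangement of `f` by `μ`. -/
def DominatedBy {d : ℕ} (f : Fin d → ℕ) (μ : YoungDiagram) : Prop :=
  ∀ S : Finset (Fin d), ∑ i ∈ S, f i ≤ ∑ j ∈ range #S, μ.rowLen j

namespace YoungDiagram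

variable (μ : YoungDiagram)

lemma card_filter_fst_lt (k : ℕ) : #{c ∈ μ.cells | c.1 < k} = ∑ i ∈ range k, μ.rowLen i := by
  rw [card_eq_sum_card_fiberwise (f := Prod.fst) (t := range k) fun c hc => by
    simpa using (mem_filter.mp hc).2]
  refine sum_congr rfl fun i hi => ?_
  rw [rowLen_eq_card, row, filter_filter]
  congr 1
  exact filter_congr fun c _ => by
    simp only [mem_range] at hi; constructor <;> rintro ⟨h⟩ <;> omega

lemma card_eq_sum_rowLen {d : ℕ} (hrows : μ.colLen 0 ≤ d) :
    μ.card = ∑ i ∈ range d, μ.rowLen i := by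
  rw [← card_filter_fst_lt, filter_true_of_mem]
  intro c hc
  have := mem_iff_lt_colLen.mp (μ.up_left_mem le_rfl (Nat.zero_le c.2) ((mem_cells c).mp hc))
  omega

lemma colLen_zero_le_iff (d : ℕ) : μ.colLen 0 ≤ d ↔ μ.rowLen d = 0 := by
  rw [← not_lt, ← mem_iff_lt_colLen, mem_iff_lt_rowLen, Nat.pos_iff_ne_zero, not_not]

lemma card_col_filter_fst_lt (j k : ℕ) : #{c ∈ μ.col j | c.1 < k} = min k (μ.colLen j) := by
  rw [col_eq_prod, filter_product_left (· < k), card_product, card_singleton, mul_one]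
  convert card_range (min k (μ.colLen j)) using 2
  ext; simp; omega

def truncate (g : ℕ → ℕ) (hg : Antitone g) : YoungDiagram where
  cells := {c ∈ μ.cells | c.2 < g c.1}
  isLowerSet := by
    rintro ⟨i, j⟩ ⟨i', j'⟩ ⟨hi, hj⟩ hc
    simp only [coe_filter, mem_cells, Set.mem_ofPred_eq] at hc ⊢
    exact ⟨μ.up_left_mem hi hj hc.1, hj.trans_lt (hc.2.trans_le (hg hi))⟩

section truncate

variable {μ} {g : ℕ → ℕ} {hg : Antitone g}

lemma mem_truncate {c : ℕ × ℕ} : c ∈ μ.truncate g hg ↔ c ∈ μ ∧ c.2 < g c.1 := by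
  rw [← mem_cells, truncate, mem_filter, mem_cells]

lemma truncate_le : μ.truncate g hg ≤ μ := fun _ hc => (mem_truncate.mp hc).1

lemma rowLen_truncate (i : ℕ) : (μ.truncate g hg).rowLen i = min (μ.rowLen i) (g i) :=
  eq_of_forall_lt_iff fun j => by
    rw [← mem_iff_lt_rowLen, mem_truncate, mem_iff_lt_rowLen, lt_min_iff]

end truncate

variable (F : ℕ)

/-- Deleting the bottom cell of each of the first `F` columns takes
`min F (μ.rowLen i) - min F (μ.rowLen (i + 1))` cells from row `i`; `μ.dropStrip F` shortens
every row by that amount, so `μ / μ.dropStrip F` is a horizontal strip. -/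
def dropStrip : YoungDiagram :=
  μ.truncate (fun i => μ.rowLen i - min F (μ.rowLen i) + min F (μ.rowLen (i + 1)))
    (antitone_nat_of_succ_le fun i => by
      have := μ.rowLen_anti i (i + 1) i.le_succ
      have := μ.rowLen_anti (i + 1) (i + 1 + 1) (i + 1).le_succ
      omega)

lemma rowLen_dropStrip (i : ℕ) :
    (μ.dropStrip F).rowLen i = μ.rowLen i - min F (μ.rowLen i) + min F (μ.rowLen (i + 1)) := by
  have := μ.rowLen_anti i (i + 1) i.le_succ
  rw [dropStrip, rowLen_truncate]
  omega

lemma dropStrip_le : μ.dropStrip F ≤ μ := truncate_le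

lemma rowLen_succ_le_rowLen_dropStrip (i : ℕ) :
    μ.rowLen (i + 1) ≤ (μ.dropStrip F).rowLen i := by
  have := μ.rowLen_anti i (i + 1) i.le_succ
  rw [rowLen_dropStrip]
  omega

lemma sum_range_rowLen_dropStrip (hF : F ≤ μ.rowLen 0) (m : ℕ) :
    ∑ i ∈ range m, (μ.dropStrip F).rowLen i + F =
      ∑ i ∈ range m, μ.rowLen i + min F (μ.rowLen m) := by
  induction m with
  | zero => simpa using hF
  | succ m ih =>
    have := μ.rowLen_anti m (m + 1) m.le_succ
    rw [sum_range_succ, sum_range_succ, rowLen_dropStrip]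
    omega

end YoungDiagram

namespace SemistandardYoungTableau

section count

variable {μ : YoungDiagram} (T : SemistandardYoungTableau μ)

lemma injOn_col (j : ℕ) : Set.InjOn (fun c : ℕ × ℕ => T c.1 c.2) (μ.col j) := by
  rintro ⟨i, j₁⟩ hi ⟨i', j₂⟩ hi' heq
  simp only [coe_filter, YoungDiagram.col, Set.mem_ofPred_eq, YoungDiagram.mem_cells] at hi hi' heq
  obtain ⟨hi, rfl⟩ := hi
  obtain ⟨hi', rfl⟩ := hi'
  rcases lt_trichotomy i i' with h | rfl | h
  · exact absurd heq (T.col_strict h hi').ne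
  · rfl
  · exact absurd heq (T.col_strict h hi).ne'

lemma card_col_filter_mem_le (V : Finset ℕ) (j : ℕ) :
    #{c ∈ μ.col j | T c.1 c.2 ∈ V} ≤ #{c ∈ μ.col j | c.1 < #V} := by
  rw [μ.card_col_filter_fst_lt, le_min_iff, μ.colLen_eq_card]
  exact ⟨card_le_card_of_injOn _ (fun c hc => (mem_filter.mp hc).2)
      ((T.injOn_col j).mono (coe_subset.mpr (filter_subset _ _))), card_filter_le _ _⟩

lemma card_filter_mem_le (V : Finset ℕ) :
    #{c ∈ μ.cells | T c.1 c.2 ∈ V} ≤ ∑ i ∈ range #V, μ.rowLen i := by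
  rw [← μ.card_filter_fst_lt]
  have hcols : ∀ p : ℕ × ℕ → Prop, [DecidablePred p] → #{c ∈ μ.cells | p c} =
      ∑ j ∈ μ.cells.image Prod.snd, #{c ∈ μ.col j | p c} := fun p _ => by
    rw [card_eq_sum_card_fiberwise (f := Prod.snd) fun c hc =>
      mem_image_of_mem _ (mem_filter.mp hc).1]
    simp only [YoungDiagram.col, filter_filter, and_comm]
  rw [hcols, hcols]
  exact sum_le_sum fun j _ => T.card_col_filter_mem_le V j

end count

section fillStrip

variable {ν μ : YoungDiagram} (T : SemistandardYoungTableau ν) (hle : ν ≤ μ)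
  (hstrip : ∀ i, μ.rowLen (i + 1) ≤ ν.rowLen i) (m : ℕ) (hm : ∀ i j, (i, j) ∈ ν → T i j < m)

def fillStrip : SemistandardYoungTableau μ where
  entry i j := if (i, j) ∈ ν then T i j else if (i, j) ∈ μ then m else 0
  row_weak' {i j₁ j₂} hj h₂ := by
    by_cases hν₂ : (i, j₂) ∈ ν
    · rw [if_pos hν₂, if_pos (ν.up_left_mem le_rfl hj.le hν₂)]
      exact T.row_weak hj hν₂
    · rw [if_neg hν₂, if_pos h₂]
      split_ifs with hν₁
      exacts [(hm _ _ hν₁).le, le_rfl, m.zero_le]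
  col_strict' {i₁ i₂ j} hi h₂ := by
    have hν₁ : (i₁, j) ∈ ν := YoungDiagram.mem_iff_lt_rowLen.mpr <|
      (YoungDiagram.mem_iff_lt_rowLen.mp h₂).trans_le
        ((μ.rowLen_anti _ _ hi).trans (hstrip i₁))
    rw [if_pos hν₁]
    split_ifs with hν₂
    · exact T.col_strict hi hν₂
    · exact hm _ _ hν₁
  zeros' {i j} h := by
    rw [if_neg fun hν => h (hle hν), if_neg h]

lemma fillStrip_apply_of_mem {i j : ℕ} (h : (i, j) ∈ ν) :
    T.fillStrip hle hstrip m hm i j = T i j :=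
  if_pos h

lemma fillStrip_apply_of_notMem {i j : ℕ} (hμ : (i, j) ∈ μ) (hν : (i, j) ∉ ν) :
    T.fillStrip hle hstrip m hm i j = m := by
  rw [← to_fun_eq_coe]
  exact (if_neg hν).trans (if_pos hμ)

end fillStrip

end SemistandardYoungTableau

theorem HasContent.dominatedBy {d : ℕ} {μ : YoungDiagram} {f : Fin d → ℕ}
    (h : HasContent μ f) : DominatedBy f μ := by
  obtain ⟨T, -, hcount⟩ := h
  intro S
  set V := S.map Fin.valEmbedding
  have hS : ∑ i ∈ S, f i = #{c ∈ μ.cells | T c.1 c.2 ∈ V} := by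
    rw [card_eq_sum_card_fiberwise (s := {c ∈ μ.cells | T c.1 c.2 ∈ V}) (t := V)
      (f := fun c => T c.1 c.2) fun c hc => (mem_filter.mp hc).2, sum_map]
    refine sum_congr rfl fun i hi => ?_
    rw [← hcount, filter_filter]
    congr 1
    exact filter_congr fun c _ => (and_iff_right_of_imp fun h => h ▸ mem_map_of_mem _ hi).symm
  rw [hS, ← card_map Fin.valEmbedding]
  exact T.card_filter_mem_le V

theorem HasContent.snoc {d : ℕ} {ν μ : YoungDiagram} {f : Fin d → ℕ} (h : HasContent ν f)
    (hle : ν ≤ μ) (hstrip : ∀ i, μ.rowLen (i + 1) ≤ ν.rowLen i) :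
    HasContent μ (Fin.snoc f (μ.card - ν.card) : Fin (d + 1) → ℕ) := by
  obtain ⟨T, hTd, hT⟩ := h
  have hm : ∀ i j, (i, j) ∈ ν → T i j < d := fun i j hij =>
    hTd _ ((YoungDiagram.mem_cells _).mpr hij)
  set T' := T.fillStrip hle hstrip d hm
  have hν : ∀ c ∈ ν, T' c.1 c.2 = T c.1 c.2 := fun c hc => T.fillStrip_apply_of_mem _ _ _ _ hc
  have hμν : ∀ c ∈ μ, c ∉ ν → T' c.1 c.2 = d := fun c hcμ hcν =>
    T.fillStrip_apply_of_notMem _ _ _ _ hcμ hcν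
  refine ⟨T', fun c hc => ?_, fun i => ?_⟩
  · rw [YoungDiagram.mem_cells] at hc
    by_cases hcν : c ∈ ν
    · exact (hν c hcν).trans_lt (hm _ _ hcν) |>.trans d.lt_succ_self
    · exact (hμν c hc hcν).trans_lt d.lt_succ_self
  induction i using Fin.lastCases with
  | last =>
    rw [Fin.snoc_last, Fin.val_last,
      ← card_sdiff_of_subset (YoungDiagram.cells_subset_iff.mpr hle)]
    congr 1
    ext c
    simp only [mem_filter, mem_sdiff, YoungDiagram.mem_cells]
    refine ⟨fun ⟨hcμ, hc⟩ => ⟨hcμ, fun hcν => ?_⟩, fun ⟨hcμ, hcν⟩ => ⟨hcμ, hμν c hcμ hcν⟩⟩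
    exact (hm _ _ hcν).ne ((hν c hcν).symm.trans hc)
  | cast i =>
    rw [Fin.snoc_castSucc, ← hT, Fin.val_castSucc]
    congr 1
    ext c
    simp only [mem_filter, YoungDiagram.mem_cells]
    refine ⟨fun ⟨hcμ, hc⟩ => ?_, fun ⟨hcν, hc⟩ => ⟨hle hcν, (hν c hcν).trans hc⟩⟩
    by_cases hcν : c ∈ ν
    · exact ⟨hcν, (hν c hcν).symm.trans hc⟩
    · exact absurd ((hμν c hcμ hcν).symm.trans hc) i.2.ne'

namespace DominatedBy

variable {μ : YoungDiagram}

lemma le_rowLen_zero {d : ℕ} {f : Fin (d + 1) → ℕ} (hdom : DominatedBy f μ) :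
    f (Fin.last d) ≤ μ.rowLen 0 := by
  simpa using hdom {Fin.last d}

theorem init_dropStrip {d : ℕ} {f : Fin (d + 1) → ℕ} (hdom : DominatedBy f μ) :
    DominatedBy (Fin.init f) (μ.dropStrip (f (Fin.last d))) := by
  intro S
  have hS := hdom (S.map Fin.castSuccEmb)
  have hS' := hdom (insert (Fin.last d) (S.map Fin.castSuccEmb))
  have hlast : Fin.last d ∉ S.map Fin.castSuccEmb := by simp [Fin.castSucc_ne_last]
  rw [sum_map, card_map] at hS
  rw [sum_insert hlast, card_insert_of_notMem hlast, sum_map, card_map, sum_range_succ] at hS'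
  have := μ.sum_range_rowLen_dropStrip _ hdom.le_rowLen_zero #S
  simp only [Fin.castSuccEmb_apply] at hS hS'
  change ∑ i ∈ S, f i.castSucc ≤ _
  omega

theorem hasContent {d : ℕ} {f : Fin d → ℕ} (hdom : DominatedBy f μ) (hrows : μ.colLen 0 ≤ d)
    (hsum : ∑ i, f i = μ.card) : HasContent μ f := by
  induction d generalizing μ with
  | zero =>
    have hμ : μ.cells = ∅ := by simpa [eq_comm] using hsum
    exact ⟨.highestWeight μ, by simp [hμ], fun i => i.elim0⟩
  | succ d ih =>
    set F := f (Fin.last d)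
    set ν := μ.dropStrip F
    have hμ : μ.card = ∑ i ∈ range (d + 1), μ.rowLen i := μ.card_eq_sum_rowLen hrows
    have hμd : μ.rowLen (d + 1) = 0 := (μ.colLen_zero_le_iff _).mp hrows
    have hFd : μ.rowLen d ≤ F := by
      have h := hdom (univ.erase (Fin.last d))
      rw [card_erase_of_mem (mem_univ _), card_univ, Fintype.card_fin, Nat.add_sub_cancel] at h
      have := sum_erase_add univ f (mem_univ (Fin.last d))
      rw [hsum, hμ, sum_range_succ] at this
      omega
    have hνrows : ν.colLen 0 ≤ d := by
      rw [YoungDiagram.colLen_zero_le_iff, YoungDiagram.rowLen_dropStrip, hμd, Nat.min_zero,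
        add_zero]
      omega
    have hν : ν.card + F = μ.card := by
      have := μ.sum_range_rowLen_dropStrip F hdom.le_rowLen_zero (d + 1)
      rw [hμd, Nat.min_zero, add_zero, ← hμ] at this
      rw [ν.card_eq_sum_rowLen (hνrows.trans d.le_succ), this]
    have hνsum : ∑ i, Fin.init f i = ν.card := by
      rw [Fin.sum_univ_castSucc] at hsum
      exact Nat.add_right_cancel (hsum.trans hν.symm)
    have := (ih hdom.init_dropStrip hνrows hνsum).snoc (μ.dropStrip_le F)
      (μ.rowLen_succ_le_rowLen_dropStrip F)
    rwa [← hν, Nat.add_sub_cancel_left, Fin.snoc_init_self] at this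

end DominatedBy

lemma sum_mul_le_sum_range_of_antitone {d k : ℕ} {c : Fin d → ℝ} (hc0 : 0 ≤ c) (hc1 : c ≤ 1)
    (hck : ∑ j, c j = k) {l : ℕ → ℝ} (hl : Antitone l) :
    ∑ j : Fin d, c j * l j ≤ ∑ j ∈ range k, l j := by
  have hkd : k ≤ d := by
    have : (k : ℝ) ≤ d := hck ▸ (sum_le_sum fun j _ => hc1 j).trans_eq (by simp)
    exact_mod_cast this
  set e : ℕ → ℝ := fun j => if j < k then 1 else 0
  have he : ∀ g : ℕ → ℝ, ∑ j : Fin d, e j * g j = ∑ j ∈ range k, g j := fun g => by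
    have hfilter : {j ∈ range d | j < k} = range k := by ext; simp; omega
    rw [Fin.sum_univ_eq_sum_range (fun j => e j * g j)]
    simp only [e, ite_mul, one_mul, zero_mul, ← sum_filter, hfilter]
  -- `e` is the largest admissible weight where `l ≥ l k` and the smallest where `l ≤ l k`
  have hterm : ∀ j : Fin d, (c j - e j) * (l j - l k) ≤ 0 := fun j => by
    by_cases hj : (j : ℕ) < k
    · exact mul_nonpos_of_nonpos_of_nonneg (by simpa [e, hj] using hc1 j)
        (sub_nonneg.mpr (hl hj.le))
    · exact mul_nonpos_of_nonneg_of_nonpos (by simpa [e, hj] using hc0 j)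
        (sub_nonpos.mpr (hl (not_lt.mp hj)))
  have hsplit : ∑ j : Fin d, (c j - e j) * (l j - l k) =
      ∑ j : Fin d, c j * l j - ∑ j ∈ range k, l j - (∑ j, c j - k) * l k := by
    have he1 : ∑ j : Fin d, e j = k := by simpa using he fun _ => 1
    simp only [mul_sub, sub_mul, sum_sub_distrib, ← sum_mul, he, he1]
  rw [hck, sub_self, zero_mul, sub_zero] at hsplit
  linarith [sum_nonpos fun j (_ : j ∈ univ) => hterm j]

theorem dominatedBy_of_mem_doublyStochastic {d : ℕ} {μ : YoungDiagram} {f : Fin d → ℕ}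
    {D : Matrix (Fin d) (Fin d) ℝ} (hD : D ∈ doublyStochastic ℝ (Fin d))
    (hDf : ∀ i, (f i : ℝ) = ∑ j, D i j * μ.rowLen j) : DominatedBy f μ := by
  intro S
  set c : Fin d → ℝ := fun j => ∑ i ∈ S, D i j
  have hc0 : 0 ≤ c := fun j => sum_nonneg fun i _ => nonneg_of_mem_doublyStochastic hD
  have hc1 : c ≤ 1 := fun j => (sum_le_sum_of_subset_of_nonneg (subset_univ S)
    fun i _ _ => nonneg_of_mem_doublyStochastic hD).trans_eq (sum_col_of_mem_doublyStochastic hD j)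
  have hcS : ∑ j, c j = #S := by
    rw [sum_comm]; simp [sum_row_of_mem_doublyStochastic hD]
  have hfS : (∑ i ∈ S, f i : ℝ) = ∑ j, c j * μ.rowLen j := by
    simp only [c, sum_mul]; rw [sum_comm]; exact sum_congr rfl fun i _ => hDf i
  have := sum_mul_le_sum_range_of_antitone hc0 hc1 hcS
    (l := fun j => (μ.rowLen j : ℝ)) fun i j h => Nat.cast_le.mpr (μ.rowLen_anti i j h)
  exact_mod_cast hfS.trans_le this

lemma sum_mul_nonneg_of_monotoneOn {n : ℕ} {a b : ℕ → ℝ} (ha : MonotoneOn a (range n))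
    (hb : ∀ m ≤ n, ∑ k ∈ range m, b k ≤ 0) (hbn : ∑ k ∈ range n, b k = 0) :
    0 ≤ ∑ k ∈ range n, a k * b k := by
  have := sum_range_by_parts a b n
  simp only [smul_eq_mul] at this
  rw [this, hbn, mul_zero, zero_sub, neg_nonneg]
  exact sum_nonpos fun k hk => mul_nonpos_of_nonneg_of_nonpos
    (sub_nonneg.mpr (ha (by simp at hk ⊢; omega) (by simp at hk ⊢; omega) k.le_succ))
    (hb _ (by simp at hk; omega))

lemma Fin.sum_filter_val_lt {M : Type*} [AddCommMonoid M] {d m : ℕ} (hm : m ≤ d) (g : ℕ → M) :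
    ∑ k ∈ univ.filter (fun k : Fin d => (k : ℕ) < m), g k = ∑ j ∈ range m, g j := by
  have : range m = (univ.filter fun k : Fin d => (k : ℕ) < m).map Fin.valEmbedding := by
    ext x
    simp only [mem_range, mem_map, mem_filter_univ, Fin.valEmbedding_apply]
    exact ⟨fun hx => ⟨⟨x, by omega⟩, hx, rfl⟩, by rintro ⟨k, hk, rfl⟩; exact hk⟩
  rw [this, sum_map]
  rfl

namespace DominatedBy

variable {d : ℕ} {f : Fin d → ℕ} {μ : YoungDiagram}

theorem exists_perm_sum_mul_le (hdom : DominatedBy f μ)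
    (hsum : ∑ i, f i = ∑ j ∈ range d, μ.rowLen j) (c : Fin d → ℝ) :
    ∃ σ : Equiv.Perm (Fin d), ∑ i, c i * μ.rowLen (σ i) ≤ ∑ i, c i * f i := by
  set τ := Tuple.sort c
  -- `τ.symm` pairs the increasing rearrangement `c ∘ τ` with the decreasing rows
  refine ⟨τ.symm, ?_⟩
  set a := Function.extend Fin.val (c ∘ τ) 0
  set b := Function.extend Fin.val (fun k => (f (τ k) : ℝ) - μ.rowLen k) 0
  have hb : ∀ m ≤ d, ∑ k ∈ range m, b k =
      ∑ k ∈ univ.filter (fun k : Fin d => (k : ℕ) < m), (f (τ k) : ℝ) -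
        ∑ j ∈ range m, (μ.rowLen j : ℝ) := by
    intro m hm
    rw [← Fin.sum_filter_val_lt hm, ← Fin.sum_filter_val_lt hm, ← sum_sub_distrib]
    exact sum_congr rfl fun k _ => Fin.val_injective.extend_apply _ _ _
  have key : 0 ≤ ∑ k ∈ range d, a k * b k := by
    refine sum_mul_nonneg_of_monotoneOn (fun i hi j hj hij => ?_) (fun m hm => ?_) ?_
    · obtain ⟨i, rfl⟩ : ∃ k : Fin d, (k : ℕ) = i := ⟨⟨i, by simpa using hi⟩, rfl⟩
      obtain ⟨j, rfl⟩ : ∃ k : Fin d, (k : ℕ) = j := ⟨⟨j, by simpa using hj⟩, rfl⟩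
      simp only [a, Fin.val_injective.extend_apply]
      exact Tuple.monotone_sort c hij
    · have h := hdom ((univ.filter fun k : Fin d => (k : ℕ) < m).map τ.toEmbedding)
      rw [sum_map, card_map, Fin.card_filter_val_lt, min_eq_right hm] at h
      rw [hb m hm, sub_nonpos]
      exact_mod_cast h
    · rw [hb d le_rfl, filter_true_of_mem fun k _ => k.2, sub_eq_zero]
      simp only [Equiv.sum_comp τ fun i => (f i : ℝ)]
      exact_mod_cast hsum
  rw [← Fin.sum_univ_eq_sum_range (fun k => a k * b k)] at key
  simp only [a, b, Fin.val_injective.extend_apply, Function.comp_apply, mul_sub, sum_sub_distrib,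
    sub_nonneg] at key
  rw [← Equiv.sum_comp τ]
  convert key using 1
  · simp
  · exact (Equiv.sum_comp τ _).symm

theorem exists_mem_doublyStochastic (hdom : DominatedBy f μ)
    (hsum : ∑ i, f i = ∑ j ∈ range d, μ.rowLen j) :
    ∃ D ∈ doublyStochastic ℝ (Fin d), ∀ i, (f i : ℝ) = ∑ j, D i j * μ.rowLen j := by
  -- `L D = D *ᵥ μ.rowLen`
  set L : Matrix (Fin d) (Fin d) ℝ →ₗ[ℝ] Fin d → ℝ :=
    LinearMap.applyₗ (fun j : Fin d => (μ.rowLen j : ℝ)) ∘ₗ Matrix.toLin'.toLinearMap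
  suffices (fun i => (f i : ℝ)) ∈ L '' doublyStochastic ℝ (Fin d) by
    obtain ⟨D, hD, hDf⟩ := this
    exact ⟨D, hD, fun i => (congrFun hDf i).symm⟩
  rw [doublyStochastic_eq_convexHull_permMatrix, LinearMap.image_convexHull]
  by_contra hf
  obtain ⟨φ, u, hφf, hφ⟩ := geometric_hahn_banach_point_closed (convex_convexHull ℝ _)
    (((Set.finite_range _).image L).isClosed_convexHull ℝ) hf
  obtain ⟨σ, hσ⟩ := hdom.exists_perm_sum_mul_le hsum fun i => φ (Pi.single i 1)
  have := hφ (L (σ.permMatrix ℝ)) (subset_convexHull _ _ ⟨_, ⟨σ, rfl⟩, rfl⟩)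
  have hφ_apply : ∀ x, φ x = ∑ i, φ (Pi.single i 1) * x i := fun x => by
    conv_lhs => rw [← univ_sum_single x]
    rw [map_sum]
    refine sum_congr rfl fun i _ => ?_
    rw [mul_comm, ← smul_eq_mul, ← map_smul, ← Pi.single_smul, smul_eq_mul, mul_one]
  rw [hφ_apply] at this hφf
  simp only [L, LinearMap.coe_comp, Function.comp_apply, LinearEquiv.coe_coe, toLin'_apply,
    LinearMap.applyₗ_apply_apply, permMatrix_mulVec] at this
  linarith

end DominatedBy

theorem kostka_pos_iff_doublyStochastic_general (d n : ℕ)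
    (lam : YoungDiagram) (hcard : lam.card = n) (hrows : lam.colLen 0 ≤ d)
    (f : Fin d → ℕ) (hf : ∑ i, f i = n) :
    HasContent lam f ↔
      ∃ D ∈ doublyStochastic ℝ (Fin d),
        ∀ i : Fin d, (f i : ℝ) = ∑ j : Fin d, D i j * (lam.rowLen j : ℝ) := by
  have hsum : ∑ i, f i = lam.card := hf.trans hcard.symm
  constructor
  · intro h
    exact h.dominatedBy.exists_mem_doublyStochastic (hsum.trans (lam.card_eq_sum_rowLen hrows))
  · rintro ⟨D, hD, hDf⟩
    exact (dominatedBy_of_mem_doublyStochastic hD hDf).hasContent hrows hsum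

/-- **Kostka positivity criterion via doubly stochastic matrices:** `K_{f,λ} > 0` iff
`f = D λ` for some doubly stochastic matrix `D`. -/
theorem kostka_pos_iff_doublyStochastic (d n : ℕ) (hd : 1 ≤ d) (hn : 1 ≤ n)
    (lam : YoungDiagram) (hcard : lam.card = n) (hrows : lam.colLen 0 ≤ d)
    (f : Fin d → ℕ) (hf : ∑ i, f i = n) :
    HasContent lam f ↔
      ∃ D ∈ doublyStochastic ℝ (Fin d),
        ∀ i : Fin d, (f i : ℝ) = ∑ j : Fin d, D i j * (lam.rowLen j : ℝ) :=
  kostka_pos_iff_doublyStochastic_general d n lam hcard hrows f hf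
end
end

section
/- No-go theorem for permutation-invariant universal detectors, first part (Theorem 6): Let d ≥ 1, n ≥ 1, ε ≥ 0, and let A be a permutation-invariant matrix indexed by (Fin n → Fin d) such that A and 1 − A are both positive semidefinite. If Re(trace(A · ρ^{⊗n})) ≥ 1 − ε for every density matrix ρ on ℂ^d, then A − (1 − ε·(2dn)^{4d²})·1 is positive semidefinite. -/
open Matrix Filter
open scoped ComplexOrder

noncomputable section

/-- A test: both `P` and `1 - P` are positive semidefinite. -/
def IsTest {ι : Type} [Fintype ι] [DecidableEq ι] (P : Matrix ι ι ℂ) : Prop :=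
  P.PosSemidef ∧ ((1 : Matrix ι ι ℂ) - P).PosSemidef

/-- Tensor product of `n` matrices on `ℂ^d`, as a matrix indexed by `Fin n → Fin d`. -/
def tensorProd {d n : ℕ} (ρs : Fin n → Matrix (Fin d) (Fin d) ℂ) :
    Matrix (Fin n → Fin d) (Fin n → Fin d) ℂ :=
  fun i j => ∏ k, ρs k (i k) (j k)

/-- `n`-fold tensor power of a matrix on `ℂ^d`. -/
def tensorPow {d : ℕ} (ρ : Matrix (Fin d) (Fin d) ℂ) (n : ℕ) :
    Matrix (Fin n → Fin d) (Fin n → Fin d) ℂ :=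
  tensorProd fun _ => ρ

/-- Quantum relative entropy `D(ρ‖σ)` (base-2 logarithm) of `ρ` w.r.t. the diagonal density
matrix with diagonal `t`, written using the eigenvalues of `ρ` and its diagonal entries. -/
def qRelEnt {d : ℕ} (ρ : Matrix (Fin d) (Fin d) ℂ) (t : Fin d → ℝ) : ℝ :=
  if h : ρ.IsHermitian then
    (∑ i, h.eigenvalues i * Real.logb 2 (h.eigenvalues i))
      - ∑ i, (ρ i i).re * Real.logb 2 (t i)
  else 0

/-- Permutation invariance of an operator on `(ℂ^d)^{⊗ n}`. -/
def PermInvariant {d n : ℕ} (A : Matrix (Fin n → Fin d) (Fin n → Fin d) ℂ) : Prop :=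
  ∀ π : Equiv.Perm (Fin n), ∀ i j, A (i ∘ π) (j ∘ π) = A i j

/-- The constant `α = 1/(2 ln 2)` from Pinsker's inequality. -/
def alphaC : ℝ := 1 / (2 * Real.log 2)

/-- The error term `Θ(n, ε, d, σ)`, where `t` is the diagonal of `σ`. -/
def Theta {d : ℕ} (n : ℕ) (ε : ℝ) (t : Fin d → ℝ) : ℝ :=
  ((d : ℝ) ^ 2 / (n : ℝ)) * Real.logb 2 (2 * (n : ℝ))
    + ε * Real.logb 2 ((d : ℝ) / ε)
    + (d : ℝ) * ε * ⨆ i, |Real.logb 2 (t i)|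

/-!
Put `B = 1 - A`; it suffices that `B ≤ c • 1` with `c = ε m²`, where `m ≤ (n + 1) ^ d²` is the
number of types (letter counts) of words of length `n` over the alphabet `Fin d × Fin d`.

Vectorising an operator `S` on `(ℂ^d)^{⊗n}` turns `tr (Sᴴ B S)` into the quadratic form of
`B ⊗ 1` at a vector indexed by such words, and that vector is constant on type classes when `S`
is permutation-invariant. By Cauchy–Schwarz over the `m` classes it is enough to bound the form
at the indicator of a class `T` by `ε m |T|`. To do so, test the detector on the reduced states
of `ψ_z = ∑ √t(i,j) ζ^{z(i,j)} |i⟩|j⟩`, with `ζ` a primitive `(n+1)`-st root of unity: averaging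
over the phases `z` kills every cross term between different types, so
`∑_T t^T ⟨1_T, (B ⊗ 1) 1_T⟩ ≤ ε`; and when `t` is the empirical distribution of `T`, the class
of `T` is the most likely one, so its probability `|T| t^T` is at least `1 / m`.

Hence `tr (Sᴴ B S) ≤ c tr (Sᴴ S)` for every permutation-invariant `S`, in particular for the
spectral projection of `B` onto `(c, ∞)`, which forces that projection to vanish.
-/

open Finset
open scoped Kronecker MatrixOrder

lemma IsPrimitiveRoot.sum_pow_zpow_eq_ite {K : Type*} [Field K] {ζ : K} {N : ℕ}
    (hζ : IsPrimitiveRoot ζ N) {m : ℤ} (hm : |m| < N) :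
    ∑ k : Fin N, (ζ ^ m) ^ (k : ℕ) = if m = 0 then (N : K) else 0 := by
  split_ifs with h0
  · simp [h0]
  have hne : ζ ^ m ≠ 1 := fun h =>
    h0 (Int.eq_zero_of_abs_lt_dvd ((hζ.zpow_eq_one_iff_dvd m).1 h) hm)
  rw [Fin.sum_univ_eq_sum_range (fun k => (ζ ^ m) ^ k), geom_sum_eq hne, ← zpow_natCast,
    ← _root_.zpow_mul, mul_comm, _root_.zpow_mul, zpow_natCast, hζ.pow_eq_one, _root_.one_zpow,
    sub_self, zero_div]

lemma Matrix.PosSemidef.re_dotProduct_sum_le {ι τ 𝕜 : Type*} [Fintype ι] [RCLike 𝕜]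
    {M : Matrix ι ι 𝕜} (hM : M.PosSemidef) (s : Finset τ) (u : τ → ι → 𝕜) :
    RCLike.re (star (∑ T ∈ s, u T) ⬝ᵥ M *ᵥ ∑ T ∈ s, u T)
      ≤ #s * ∑ T ∈ s, RCLike.re (star (u T) ⬝ᵥ M *ᵥ u T) := by
  set b : τ → τ → ℝ := fun T T' => RCLike.re (star (u T) ⬝ᵥ M *ᵥ u T')
  have hpolar (T T' : τ) : b T T' + b T' T ≤ b T T + b T' T' := by
    have := hM.re_dotProduct_nonneg (u T - u T')
    simp only [star_sub, mulVec_sub, sub_dotProduct, dotProduct_sub, map_sub] at this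
    linarith
  have hexpand : RCLike.re (star (∑ T ∈ s, u T) ⬝ᵥ M *ᵥ ∑ T ∈ s, u T)
      = ∑ T ∈ s, ∑ T' ∈ s, b T T' := by
    simp only [b, star_sum, mulVec_sum, sum_dotProduct, dotProduct_sum, map_sum]
    exact sum_comm
  have hsym : ∑ T ∈ s, ∑ T' ∈ s, b T T' = ∑ T ∈ s, ∑ T' ∈ s, b T' T := sum_comm
  have htwice : 2 * ∑ T ∈ s, ∑ T' ∈ s, b T T' ≤ 2 * (#s * ∑ T ∈ s, b T T) :=
    calc 2 * ∑ T ∈ s, ∑ T' ∈ s, b T T'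
        = ∑ T ∈ s, ∑ T' ∈ s, (b T T' + b T' T) := by
          rw [two_mul]; nth_rewrite 2 [hsym]; simp only [sum_add_distrib]
      _ ≤ ∑ T ∈ s, ∑ T' ∈ s, (b T T + b T' T') :=
          sum_le_sum fun T _ => sum_le_sum fun T' _ => hpolar T T'
      _ = 2 * (#s * ∑ T ∈ s, b T T) := by
          simp only [sum_add_distrib, sum_const, nsmul_eq_mul, ← mul_sum]; ring
  rw [hexpand]
  linarith

section Spectral

variable {N : Type*} [Fintype N] [DecidableEq N]

lemma Matrix.IsHermitian.trace_cfc {B : Matrix N N ℂ} (hB : B.IsHermitian) (f : ℝ → ℝ) :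
    (cfc f B).trace = ∑ i, (f (hB.eigenvalues i) : ℂ) := by
  rw [hB.cfc_eq, IsHermitian.cfc, Unitary.conjStarAlgAut_apply, trace_mul_cycle,
    Unitary.coe_star_mul_self, Matrix.one_mul, trace_diagonal]
  rfl

lemma Matrix.IsHermitian.le_algebraMap_of_forall_cfc {B : Matrix N N ℂ} (hB : B.IsHermitian)
    {c : ℝ} (h : ∀ f : ℝ → ℝ,
      ((cfc f B)ᴴ * B * cfc f B).trace.re ≤ c * ((cfc f B)ᴴ * cfc f B).trace.re) :
    B ≤ algebraMap ℝ (Matrix N N ℂ) c := by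
  have hcont (g : ℝ → ℝ) : ContinuousOn g (spectrum ℝ B) := finite_real_spectrum.continuousOn g
  set f : ℝ → ℝ := (Set.Ioi c).indicator 1
  have hf : (cfc f B)ᴴ = cfc f B := (cfc_predicate f B).star_eq
  have hBf : (cfc f B)ᴴ * B * cfc f B = cfc (fun x => f x * x * f x) B := by
    rw [hf, cfc_mul _ _ _ (hcont _) (hcont _), cfc_mul _ _ _ (hcont _) (hcont _), cfc_id' ℝ B]
  have hff : (cfc f B)ᴴ * cfc f B = cfc (fun x => f x * f x) B := by
    rw [hf, cfc_mul _ _ _ (hcont _) (hcont _)]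
  have hpart (x : ℝ) : f x * x * f x - c * (f x * f x) = max (x - c) 0 := by
    by_cases hx : c < x
    · simp [f, hx, hx.le]
    · simp [f, hx, not_lt.1 hx]
  have hsum : ∑ i, max (hB.eigenvalues i - c) 0 ≤ 0 := by
    have := h f
    rw [hBf, hff, hB.trace_cfc, hB.trace_cfc, Complex.re_sum, Complex.re_sum, mul_sum,
      ← sub_nonpos, ← sum_sub_distrib] at this
    simpa only [Complex.ofReal_re, hpart] using this
  refine le_algebraMap_of_spectrum_le (fun x hx => ?_) hB.isSelfAdjoint
  obtain ⟨i, rfl⟩ := hB.spectrum_real_eq_range_eigenvalues ▸ hx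
  have := (single_le_sum (fun j _ => le_max_right (hB.eigenvalues j - c) 0) (mem_univ i)).trans
    hsum
  linarith [le_max_left (hB.eigenvalues i - c) 0]

end Spectral

section WordType

variable {α : Type*} [DecidableEq α] {n : ℕ}

def wordType (w : Fin n → α) (a : α) : ℕ := #{k | w k = a}

lemma wordType_le (w : Fin n → α) (a : α) : wordType w a ≤ n :=
  (card_filter_le _ _).trans_eq (card_fin n)

lemma wordType_comp_perm (w : Fin n → α) (π : Equiv.Perm (Fin n)) :
    wordType (w ∘ π) = wordType w := by
  funext a
  exact card_equiv π (by simp)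

lemma wordType_eq_iff_exists_perm {w w' : Fin n → α} :
    wordType w' = wordType w ↔ ∃ π : Equiv.Perm (Fin n), w' = w ∘ π := by
  refine ⟨fun h => ?_, fun ⟨π, hπ⟩ => hπ ▸ wordType_comp_perm w π⟩
  have hfib (a : α) : {k // w' k = a} ≃ {k // w k = a} :=
    Fintype.equivOfCardEq (by simpa [Fintype.card_subtype, wordType] using congrFun h a)
  exact ⟨Equiv.ofFiberEquiv hfib, funext fun k => (Equiv.ofFiberEquiv_map hfib k).symm⟩

variable [Fintype α]

lemma sum_wordType (w : Fin n → α) : ∑ a, wordType w a = n := by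
  have := (card_eq_sum_card_fiberwise (s := univ) (t := univ) fun k _ => mem_univ (w k)).symm
  rwa [card_fin] at this

lemma prod_apply_eq_prod_pow_wordType {M : Type*} [CommMonoid M] (g : α → M) (w : Fin n → α) :
    ∏ k, g (w k) = ∏ a, g a ^ wordType w a := by
  rw [← prod_fiberwise univ w]
  refine prod_congr rfl fun a _ => ?_
  rw [prod_congr rfl fun k hk => congrArg g (mem_filter.1 hk).2, prod_const]
  rfl

variable (n) in
def typeClass (T : α → ℕ) : Finset (Fin n → α) := {w | wordType w = T}

variable (α n) in
def wordTypes : Finset (α → ℕ) := (univ : Finset (Fin n → α)).image wordType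

lemma wordType_mem_wordTypes (w : Fin n → α) : wordType w ∈ wordTypes α n :=
  mem_image_of_mem _ (mem_univ w)

lemma card_wordTypes_le : #(wordTypes α n) ≤ (n + 1) ^ Fintype.card α :=
  calc #(wordTypes α n) ≤ #(Fintype.piFinset fun _ : α => range (n + 1)) := by
        refine card_le_card fun T hT => ?_
        obtain ⟨w, -, rfl⟩ := mem_image.1 hT
        simpa [Nat.lt_succ_iff] using wordType_le w
    _ = (n + 1) ^ Fintype.card α := by simp

lemma card_typeClass_mul_prod_factorial (w : Fin n → α) :
    #(typeClass n (wordType w)) * ∏ a, (wordType w a).factorial = n.factorial := by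
  have hfiber : ∀ w' ∈ typeClass n (wordType w),
      #{π : Equiv.Perm (Fin n) | w ∘ π = w'} = ∏ a, (wordType w a).factorial := by
    intro w' hw'
    obtain ⟨τ, rfl⟩ := wordType_eq_iff_exists_perm.1 (mem_filter.1 hw').2
    rw [← Fintype.card_subtype]
    calc Fintype.card {π : Equiv.Perm (Fin n) // w ∘ π = w ∘ τ}
        = Fintype.card {g : Equiv.Perm (Fin n) // w ∘ g = w} :=
          Fintype.card_congr <| (Equiv.mulRight τ⁻¹).subtypeEquiv fun π => by
            constructor
            · intro h
              funext k
              simpa using congrFun h (τ⁻¹ k)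
            · intro h
              funext k
              simpa using congrFun h (τ k)
      _ = ∏ a, (wordType w a).factorial := by
          rw [DomMulAct.stabilizer_card]
          simp only [Fintype.card_subtype, wordType]
  calc #(typeClass n (wordType w)) * ∏ a, (wordType w a).factorial
      = #(univ : Finset (Equiv.Perm (Fin n))) := by
        rw [card_eq_sum_card_fiberwise (f := fun π : Equiv.Perm (Fin n) => w ∘ π)
            (t := typeClass n (wordType w))
            fun π _ => mem_filter.2 ⟨mem_univ _, wordType_comp_perm w π⟩,
          sum_congr rfl hfiber, sum_const, smul_eq_mul]
    _ = n.factorial := by simp [Fintype.card_perm]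

lemma pow_mul_factorial_le (m k : ℕ) : m ^ k * m.factorial ≤ m ^ m * k.factorial := by
  rcases le_total m k with hmk | hkm
  · calc m ^ k * m.factorial = m ^ m * (m.factorial * m ^ (k - m)) := by
          rw [← Nat.pow_sub_mul_pow m hmk]; ring
      _ ≤ m ^ m * k.factorial :=
          Nat.mul_le_mul_left _ (Nat.factorial_mul_pow_sub_le_factorial hmk)
  · calc m ^ k * m.factorial = m ^ k * ((m - (m - k)).factorial * m.descFactorial (m - k)) := by
          rw [Nat.factorial_mul_descFactorial (Nat.sub_le m k)]
      _ ≤ m ^ k * (k.factorial * m ^ (m - k)) := by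
          rw [Nat.sub_sub_self hkm]
          exact Nat.mul_le_mul_left _ (Nat.mul_le_mul_left _ (Nat.descFactorial_le_pow m _))
      _ = m ^ m * k.factorial := by rw [← Nat.pow_sub_mul_pow m hkm]; ring

lemma card_typeClass_mul_prod_pow_le (w w' : Fin n → α) :
    #(typeClass n (wordType w')) * ∏ a, wordType w a ^ wordType w' a
      ≤ #(typeClass n (wordType w)) * ∏ a, wordType w a ^ wordType w a := by
  set T := wordType w
  set T' := wordType w'
  have hfact : (∏ a, T a ^ T' a) * ∏ a, (T a).factorial
      ≤ (∏ a, T a ^ T a) * ∏ a, (T' a).factorial := by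
    simpa only [prod_mul_distrib] using prod_le_prod' fun a _ => pow_mul_factorial_le (T a) (T' a)
  refine Nat.le_of_mul_le_mul_right (c := (∏ a, (T' a).factorial) * ∏ a, (T a).factorial) ?_
    (Nat.mul_pos (prod_pos fun a _ => (T' a).factorial_pos)
      (prod_pos fun a _ => (T a).factorial_pos))
  calc #(typeClass n T') * (∏ a, T a ^ T' a) * ((∏ a, (T' a).factorial) * ∏ a, (T a).factorial)
      = n.factorial * ((∏ a, T a ^ T' a) * ∏ a, (T a).factorial) := by
        rw [← card_typeClass_mul_prod_factorial w']; ring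
    _ ≤ n.factorial * ((∏ a, T a ^ T a) * ∏ a, (T' a).factorial) := Nat.mul_le_mul_left _ hfact
    _ = #(typeClass n T) * (∏ a, T a ^ T a) * ((∏ a, (T' a).factorial) * ∏ a, (T a).factorial) := by
        rw [← card_typeClass_mul_prod_factorial w]; ring

lemma sum_card_typeClass_mul_prod_pow {R : Type*} [CommSemiring R] (t : α → R) :
    ∑ T ∈ wordTypes α n, #(typeClass n T) * ∏ a, t a ^ T a = (∑ a, t a) ^ n :=
  calc ∑ T ∈ wordTypes α n, #(typeClass n T) * ∏ a, t a ^ T a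
      = ∑ T ∈ wordTypes α n, ∑ w ∈ typeClass n T, ∏ a, t a ^ wordType w a := by
        refine sum_congr rfl fun T _ => ?_
        rw [sum_congr rfl fun w hw => by rw [(mem_filter.1 hw).2], sum_const, nsmul_eq_mul]
    _ = ∑ w : Fin n → α, ∏ k, t (w k) := by
        simp only [typeClass, prod_apply_eq_prod_pow_wordType]
        exact sum_fiberwise_of_maps_to (fun w _ => wordType_mem_wordTypes w) _
    _ = (∑ a, t a) ^ n := by rw [← Fintype.prod_sum, prod_const, card_fin]

lemma one_le_card_wordTypes_mul_card_typeClass_mul_prod (hn : 0 < n) (w : Fin n → α) :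
    1 ≤ #(wordTypes α n)
      * (#(typeClass n (wordType w)) * ∏ a, ((wordType w a : ℝ) / n) ^ wordType w a) := by
  set t : α → ℝ := fun a => (wordType w a : ℝ) / n
  have hclass (w' : Fin n → α) : #(typeClass n (wordType w')) * ∏ a, t a ^ wordType w' a
      = ((#(typeClass n (wordType w')) * ∏ a, wordType w a ^ wordType w' a : ℕ) : ℝ)
        / (n : ℝ) ^ n := by
    simp only [t, div_pow, prod_div_distrib, prod_pow_eq_pow_sum, sum_wordType]
    push_cast; ring
  calc (1 : ℝ) = ∑ T ∈ wordTypes α n, #(typeClass n T) * ∏ a, t a ^ T a := by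
        rw [sum_card_typeClass_mul_prod_pow, ← sum_div]
        exact_mod_cast (one_pow n).symm.trans (by rw [sum_wordType, div_self (by positivity)])
    _ ≤ ∑ _T ∈ wordTypes α n, #(typeClass n (wordType w)) * ∏ a, t a ^ wordType w a := by
        refine sum_le_sum fun T hT => ?_
        obtain ⟨w', -, rfl⟩ := mem_image.1 hT
        rw [hclass, hclass]
        exact div_le_div_of_nonneg_right (by exact_mod_cast card_typeClass_mul_prod_pow_le w w')
          (by positivity)
    _ = _ := by rw [sum_const, nsmul_eq_mul]

end WordType

section Phase

variable {α : Type*} [Fintype α] [DecidableEq α] {n : ℕ}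

lemma sum_star_prod_pow_mul_prod_pow {ζ : ℂ} (hζ : IsPrimitiveRoot ζ (n + 1))
    (w w' : Fin n → α) :
    ∑ z : α → Fin (n + 1), star (∏ k, ζ ^ (z (w k) : ℕ)) * ∏ k, ζ ^ (z (w' k) : ℕ)
      = if wordType w = wordType w' then ((n + 1 : ℕ) : ℂ) ^ Fintype.card α else 0 := by
  have hζ0 : ζ ≠ 0 := hζ.ne_zero n.succ_ne_zero
  have hstar : star ζ = ζ⁻¹ := by
    rw [Complex.inv_def, Complex.normSq_eq_norm_sq, hζ.norm'_eq_one n.succ_ne_zero]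
    simp
  have hterm (z : α → Fin (n + 1)) :
      star (∏ k, ζ ^ (z (w k) : ℕ)) * ∏ k, ζ ^ (z (w' k) : ℕ)
        = ∏ a, (ζ ^ ((wordType w' a : ℤ) - wordType w a)) ^ (z a : ℕ) := by
    rw [prod_apply_eq_prod_pow_wordType (fun a => ζ ^ (z a : ℕ)),
      prod_apply_eq_prod_pow_wordType (fun a => ζ ^ (z a : ℕ)), star_prod, ← prod_mul_distrib]
    refine prod_congr rfl fun a _ => ?_
    simp only [star_pow, hstar, inv_pow, zpow_sub₀ hζ0, zpow_natCast, div_pow, ← pow_mul]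
    ring
  have hm (a : α) : |(wordType w' a : ℤ) - wordType w a| < ((n + 1 : ℕ) : ℤ) := by
    have := wordType_le w a
    have := wordType_le w' a
    rw [abs_lt]; push_cast; omega
  rw [sum_congr rfl fun z _ => hterm z, ← Fintype.prod_sum
    (fun a (k : Fin (n + 1)) => (ζ ^ ((wordType w' a : ℤ) - wordType w a)) ^ (k : ℕ))]
  simp_rw [hζ.sum_pow_zpow_eq_ite (hm _), Fintype.prod_ite_zero, prod_const, card_univ,
    sub_eq_zero, Nat.cast_inj, funext_iff, eq_comm]

def phaseVec (ζ : ℂ) (t : α → ℝ) (z : α → Fin (n + 1)) (w : Fin n → α) : ℂ :=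
  ∏ k, (√(t (w k)) : ℂ) * ζ ^ (z (w k) : ℕ)

def typeIndicator (T : α → ℕ) (w : Fin n → α) : ℂ := if wordType w = T then 1 else 0

lemma sum_star_phaseVec_mul_phaseVec {ζ : ℂ} (hζ : IsPrimitiveRoot ζ (n + 1)) {t : α → ℝ}
    (ht : ∀ a, 0 ≤ t a) (w w' : Fin n → α) :
    ∑ z, star (phaseVec ζ t z w) * phaseVec ζ t z w'
      = ((n + 1 : ℕ) : ℂ) ^ Fintype.card α
        * if wordType w = wordType w' then ((∏ a, t a ^ wordType w a : ℝ) : ℂ) else 0 := by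
  have hsplit (z : α → Fin (n + 1)) : star (phaseVec ζ t z w) * phaseVec ζ t z w'
      = (∏ k, (√(t (w k)) : ℂ)) * (∏ k, (√(t (w' k)) : ℂ))
        * (star (∏ k, ζ ^ (z (w k) : ℕ)) * ∏ k, ζ ^ (z (w' k) : ℕ)) := by
    simp only [phaseVec, prod_mul_distrib, star_mul', star_prod, Complex.star_def,
      Complex.conj_ofReal]
    ring
  rw [sum_congr rfl fun z _ => hsplit z, ← mul_sum, sum_star_prod_pow_mul_prod_pow hζ]
  split_ifs with h
  · rw [mul_comm, prod_apply_eq_prod_pow_wordType (fun a => (√(t a) : ℂ)),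
      prod_apply_eq_prod_pow_wordType (fun a => (√(t a) : ℂ)), ← h, ← prod_mul_distrib]
    push_cast
    simp only [← mul_pow, ← Complex.ofReal_mul, Real.mul_self_sqrt (ht _)]
  · simp

lemma sum_star_phaseVec_dotProduct_mulVec {ζ : ℂ} (hζ : IsPrimitiveRoot ζ (n + 1)) {t : α → ℝ}
    (ht : ∀ a, 0 ≤ t a) (M : Matrix (Fin n → α) (Fin n → α) ℂ) :
    ∑ z, star (phaseVec ζ t z) ⬝ᵥ M *ᵥ phaseVec ζ t z
      = ((n + 1 : ℕ) : ℂ) ^ Fintype.card α * ∑ T ∈ wordTypes α n,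
          ((∏ a, t a ^ T a : ℝ) : ℂ) * (star (typeIndicator T) ⬝ᵥ M *ᵥ typeIndicator T) := by
  have hexpand (u v : (Fin n → α) → ℂ) :
      star u ⬝ᵥ M *ᵥ v = ∑ w, ∑ w', M w w' * (star (u w) * v w') := by
    simp only [dotProduct, mulVec, Pi.star_apply, mul_sum]
    exact sum_congr rfl fun w _ => sum_congr rfl fun w' _ => by ring
  set c : (α → ℕ) → ℂ := fun T => ((∏ a, t a ^ T a : ℝ) : ℂ)
  have hclasses (w w' : Fin n → α) :
      ∑ T ∈ wordTypes α n, c T * (star (typeIndicator T w) * typeIndicator T w')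
        = if wordType w = wordType w' then c (wordType w) else 0 := by
    split_ifs with h
    · rw [sum_eq_single_of_mem (wordType w) (wordType_mem_wordTypes w)]
      · simp [typeIndicator, h]
      · intro T _ hT
        simp [typeIndicator, Ne.symm hT]
    · refine sum_eq_zero fun T _ => ?_
      by_cases hT : wordType w = T
      · simp [typeIndicator, hT, Ne.symm (hT ▸ h)]
      · simp [typeIndicator, hT]
  calc ∑ z, star (phaseVec ζ t z) ⬝ᵥ M *ᵥ phaseVec ζ t z
      = ∑ w, ∑ w', M w w' * ∑ z, star (phaseVec ζ t z w) * phaseVec ζ t z w' := by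
        simp only [hexpand, mul_sum]
        rw [sum_comm]
        exact sum_congr rfl fun w _ => sum_comm
    _ = ((n + 1 : ℕ) : ℂ) ^ Fintype.card α * ∑ w, ∑ w', M w w'
          * ∑ T ∈ wordTypes α n, c T * (star (typeIndicator T w) * typeIndicator T w') := by
        simp only [sum_star_phaseVec_mul_phaseVec hζ ht, hclasses, mul_sum, c]
        exact sum_congr rfl fun w _ => sum_congr rfl fun w' _ => by ring
    _ = _ := by
        simp only [hexpand, mul_sum]
        simp_rw [sum_comm (s := wordTypes α n) (t := (univ : Finset (Fin n → α)))]
        exact sum_congr rfl fun _ _ => sum_congr rfl fun _ _ => sum_congr rfl fun _ _ => by ring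

end Phase

section Detector

variable {d n : ℕ}

lemma permInvariant_iff_commute {A : Matrix (Fin n → Fin d) (Fin n → Fin d) ℂ} :
    PermInvariant A ↔ ∀ π : Equiv.Perm (Fin n),
      Commute A (Equiv.Perm.permMatrix ℂ (Equiv.arrowCongr' π.symm (Equiv.refl (Fin d)))) := by
  refine forall_congr' fun π => ?_
  rw [Commute, SemiconjBy, PEquiv.toMatrix_toPEquiv_mul, PEquiv.mul_toMatrix_toPEquiv,
    ← Matrix.ext_iff]
  change _ ↔ ∀ i j, A i (j ∘ π.symm) = A (i ∘ π) j
  constructor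
  · intro h i j
    simpa [Function.comp_def] using (h i (j ∘ π.symm)).symm
  · intro h i j
    simpa [Function.comp_def] using (h i (j ∘ π)).symm

lemma PermInvariant.cfc {A : Matrix (Fin n → Fin d) (Fin n → Fin d) ℂ} (hA : PermInvariant A)
    (f : ℝ → ℝ) : PermInvariant (cfc f A) :=
  permInvariant_iff_commute.2 fun π => (permInvariant_iff_commute.1 hA π).cfc_real f

lemma PermInvariant.one_sub {A : Matrix (Fin n → Fin d) (Fin n → Fin d) ℂ}
    (hA : PermInvariant A) : PermInvariant (1 - A) :=
  permInvariant_iff_commute.2 fun π =>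
    (Commute.one_left _).sub_left (permInvariant_iff_commute.1 hA π)

lemma trace_tensorPow (ρ : Matrix (Fin d) (Fin d) ℂ) : (tensorPow ρ n).trace = ρ.trace ^ n :=
  calc (tensorPow ρ n).trace = ∑ i : Fin n → Fin d, ∏ k, ρ (i k) (i k) := rfl
    _ = ∏ _k : Fin n, ∑ a, ρ a a := (Fintype.prod_sum fun _ a => ρ a a).symm
    _ = ρ.trace ^ n := by rw [prod_const, card_fin]; rfl

lemma tensorPow_mul (X Y : Matrix (Fin d) (Fin d) ℂ) :
    tensorPow (X * Y) n = tensorPow X n * tensorPow Y n := by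
  ext i j
  simp only [tensorPow, tensorProd, mul_apply, Fintype.prod_sum, prod_mul_distrib]

lemma tensorPow_conjTranspose (X : Matrix (Fin d) (Fin d) ℂ) :
    tensorPow Xᴴ n = (tensorPow X n)ᴴ := by
  ext i j
  simp [tensorPow, tensorProd, conjTranspose_apply, star_prod]

def pairEquiv (d n : ℕ) : (Fin n → Fin d × Fin d) ≃ (Fin n → Fin d) × (Fin n → Fin d) :=
  (Equiv.arrowProdEquivProdArrow _ _ _).trans (Equiv.prodComm _ _)

def wordVec (S : Matrix (Fin n → Fin d) (Fin n → Fin d) ℂ) : (Fin n → Fin d × Fin d) → ℂ :=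
  vec S ∘ pairEquiv d n

lemma wordVec_apply (S : Matrix (Fin n → Fin d) (Fin n → Fin d) ℂ) (w : Fin n → Fin d × Fin d) :
    wordVec S w = S (fun k => (w k).1) (fun k => (w k).2) := rfl

def ampliation (B : Matrix (Fin n → Fin d) (Fin n → Fin d) ℂ) :
    Matrix (Fin n → Fin d × Fin d) (Fin n → Fin d × Fin d) ℂ :=
  (1 ⊗ₖ B).submatrix (pairEquiv d n) (pairEquiv d n)

lemma Matrix.PosSemidef.ampliation {B : Matrix (Fin n → Fin d) (Fin n → Fin d) ℂ}
    (hB : B.PosSemidef) : (ampliation B).PosSemidef :=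
  (PosSemidef.one.kronecker hB).submatrix _

lemma ampliation_one : ampliation (1 : Matrix (Fin n → Fin d) (Fin n → Fin d) ℂ) = 1 := by
  rw [ampliation, one_kronecker_one, submatrix_one_equiv]

lemma trace_conjTranspose_mul_mul_eq_dotProduct
    (B S : Matrix (Fin n → Fin d) (Fin n → Fin d) ℂ) :
    (Sᴴ * B * S).trace = star (wordVec S) ⬝ᵥ ampliation B *ᵥ wordVec S := by
  rw [wordVec, ampliation, submatrix_mulVec_equiv, Function.comp_assoc, Equiv.self_comp_symm,
    Function.comp_id]
  change _ = star (vec S) ∘ pairEquiv d n ⬝ᵥ _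
  rw [comp_equiv_dotProduct_comp_equiv, ← vec_mul_eq_mulVec, star_vec_dotProduct_vec,
    Matrix.mul_assoc]

lemma re_trace_conjTranspose_mul_self (S : Matrix (Fin n → Fin d) (Fin n → Fin d) ℂ) :
    (Sᴴ * S).trace.re = ∑ w, ‖wordVec S w‖ ^ 2 := by
  rw [← Matrix.mul_one Sᴴ, trace_conjTranspose_mul_mul_eq_dotProduct, ampliation_one,
    one_mulVec, dotProduct, Complex.re_sum]
  refine sum_congr rfl fun w _ => ?_
  rw [Pi.star_apply, Complex.star_def, mul_comm, Complex.mul_conj, Complex.ofReal_re,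
    Complex.normSq_eq_norm_sq]

lemma PermInvariant.wordVec_eq_of_wordType_eq {S : Matrix (Fin n → Fin d) (Fin n → Fin d) ℂ}
    (hS : PermInvariant S) {w w' : Fin n → Fin d × Fin d} (h : wordType w' = wordType w) :
    wordVec S w' = wordVec S w := by
  obtain ⟨π, rfl⟩ := wordType_eq_iff_exists_perm.1 h
  rw [wordVec_apply, wordVec_apply]
  exact hS π (fun k => (w k).1) (fun k => (w k).2)

def phaseMatrix (ζ : ℂ) (t : Fin d × Fin d → ℝ) (z : Fin d × Fin d → Fin (n + 1)) :
    Matrix (Fin d) (Fin d) ℂ :=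
  of fun i j => √(t (i, j)) * ζ ^ (z (i, j) : ℕ)

lemma wordVec_tensorPow_phaseMatrix (ζ : ℂ) (t : Fin d × Fin d → ℝ)
    (z : Fin d × Fin d → Fin (n + 1)) :
    wordVec (tensorPow (phaseMatrix ζ t z) n) = phaseVec ζ t z := rfl

lemma isDensityMatrix_phaseMatrix {ζ : ℂ} (hζ : ‖ζ‖ = 1) {t : Fin d × Fin d → ℝ}
    (ht : ∀ a, 0 ≤ t a) (hsum : ∑ a, t a = 1) (z : Fin d × Fin d → Fin (n + 1)) :
    IsDensityMatrix (phaseMatrix ζ t z * (phaseMatrix ζ t z)ᴴ) := by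
  refine ⟨posSemidef_self_mul_conjTranspose _, ?_⟩
  have hentry (i j : Fin d) :
      phaseMatrix ζ t z i j * star (phaseMatrix ζ t z i j) = t (i, j) := by
    rw [Complex.star_def, Complex.mul_conj, Complex.normSq_eq_norm_sq]
    simp [phaseMatrix, norm_pow, hζ, Real.sq_sqrt (ht _), abs_of_nonneg (Real.sqrt_nonneg _)]
  simp only [trace, Matrix.diag, mul_apply, conjTranspose_apply, hentry]
  rw [← Fintype.sum_prod_type' (fun i j => (t (i, j) : ℂ)), ← Complex.ofReal_sum, hsum,
    Complex.ofReal_one]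

variable {B : Matrix (Fin n → Fin d) (Fin n → Fin d) ℂ} {ε : ℝ}

lemma sum_prod_pow_mul_re_star_typeIndicator_le
    (hdet : ∀ ρ, IsDensityMatrix ρ → (B * tensorPow ρ n).trace.re ≤ ε)
    {t : Fin d × Fin d → ℝ} (ht : ∀ a, 0 ≤ t a) (hsum : ∑ a, t a = 1) :
    ∑ T ∈ wordTypes (Fin d × Fin d) n, (∏ a, t a ^ T a)
      * (star (typeIndicator T) ⬝ᵥ ampliation B *ᵥ typeIndicator (n := n) T).re ≤ ε := by
  have hζ := Complex.isPrimitiveRoot_exp (n + 1) n.succ_ne_zero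
  set ζ := Complex.exp (2 * Real.pi * Complex.I / (n + 1 : ℕ))
  have hphase (z : Fin d × Fin d → Fin (n + 1)) :
      (star (phaseVec ζ t z) ⬝ᵥ ampliation B *ᵥ phaseVec ζ t z).re ≤ ε := by
    rw [← wordVec_tensorPow_phaseMatrix, ← trace_conjTranspose_mul_mul_eq_dotProduct,
      ← trace_mul_cycle, ← tensorPow_conjTranspose, Matrix.mul_assoc, ← tensorPow_mul]
    exact hdet _ (isDensityMatrix_phaseMatrix (hζ.norm'_eq_one n.succ_ne_zero) ht hsum z)
  have hcast : ((n + 1 : ℕ) : ℂ) ^ Fintype.card (Fin d × Fin d)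
      = (((n + 1) ^ Fintype.card (Fin d × Fin d) : ℕ) : ℝ) := by push_cast; rfl
  have := sum_le_sum fun z (_ : z ∈ univ) => hphase z
  rw [← Complex.re_sum, sum_star_phaseVec_dotProduct_mulVec hζ ht, sum_const, card_univ, hcast,
    Complex.re_ofReal_mul, Complex.re_sum, Fintype.card_fun, Fintype.card_fin, nsmul_eq_mul] at this
  simp only [Complex.re_ofReal_mul] at this
  exact le_of_mul_le_mul_left this (by positivity)

lemma re_star_typeIndicator_dotProduct_mulVec_le (hB : B.PosSemidef)
    (hdet : ∀ ρ, IsDensityMatrix ρ → (B * tensorPow ρ n).trace.re ≤ ε) (hn : 0 < n)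
    (w : Fin n → Fin d × Fin d) :
    (star (typeIndicator (wordType w)) ⬝ᵥ ampliation B *ᵥ typeIndicator (wordType w)).re
      ≤ ε * (#(wordTypes (Fin d × Fin d) n) * #(typeClass n (wordType w))) := by
  set T := wordType w
  set t : Fin d × Fin d → ℝ := fun a => (T a : ℝ) / n
  set q : ((Fin d × Fin d) → ℕ) → ℝ := fun T' =>
    (star (typeIndicator T') ⬝ᵥ ampliation B *ᵥ typeIndicator (n := n) T').re
  have ht (a : Fin d × Fin d) : 0 ≤ t a := by positivity
  have hq (T' : Fin d × Fin d → ℕ) : 0 ≤ q T' := hB.ampliation.re_dotProduct_nonneg _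
  have hsingle : (∏ a, t a ^ T a) * q T ≤ ε := by
    refine (single_le_sum (fun T' _ => ?_) (wordType_mem_wordTypes w)).trans
      (sum_prod_pow_mul_re_star_typeIndicator_le hdet ht ?_)
    · exact mul_nonneg (prod_nonneg fun a _ => pow_nonneg (ht a) _) (hq T')
    · rw [← sum_div, ← Nat.cast_sum, sum_wordType, div_self (by positivity)]
  calc q T ≤ q T * (#(wordTypes (Fin d × Fin d) n) * (#(typeClass n T) * ∏ a, t a ^ T a)) :=
        le_mul_of_one_le_right (hq T) (one_le_card_wordTypes_mul_card_typeClass_mul_prod hn w)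
    _ = #(wordTypes (Fin d × Fin d) n) * #(typeClass n T) * ((∏ a, t a ^ T a) * q T) := by ring
    _ ≤ #(wordTypes (Fin d × Fin d) n) * #(typeClass n T) * ε := by gcongr
    _ = ε * (#(wordTypes (Fin d × Fin d) n) * #(typeClass n T)) := by ring

lemma PermInvariant.typeIndicator_mul_wordVec {S : Matrix (Fin n → Fin d) (Fin n → Fin d) ℂ}
    (hS : PermInvariant S) (w₀ : Fin n → Fin d × Fin d) :
    typeIndicator (wordType w₀) * wordVec S = wordVec S w₀ • typeIndicator (wordType w₀) := by
  ext w
  by_cases h : wordType w = wordType w₀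
  · simp [typeIndicator, h, hS.wordVec_eq_of_wordType_eq h]
  · simp [typeIndicator, h]

lemma re_star_typeIndicator_mul_wordVec_le (hB : B.PosSemidef)
    (hdet : ∀ ρ, IsDensityMatrix ρ → (B * tensorPow ρ n).trace.re ≤ ε) (hn : 0 < n)
    {S : Matrix (Fin n → Fin d) (Fin n → Fin d) ℂ} (hS : PermInvariant S)
    (w₀ : Fin n → Fin d × Fin d) :
    (star (typeIndicator (wordType w₀) * wordVec S) ⬝ᵥ ampliation B *ᵥ
        (typeIndicator (wordType w₀) * wordVec S)).re
      ≤ ε * #(wordTypes (Fin d × Fin d) n)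
          * ∑ w ∈ typeClass n (wordType w₀), ‖wordVec S w‖ ^ 2 := by
  have hclass : ∑ w ∈ typeClass n (wordType w₀), ‖wordVec S w‖ ^ 2
      = #(typeClass n (wordType w₀)) * ‖wordVec S w₀‖ ^ 2 := by
    rw [sum_congr rfl fun w hw => by
        rw [hS.wordVec_eq_of_wordType_eq (mem_filter.1 hw).2], sum_const, nsmul_eq_mul]
  rw [hS.typeIndicator_mul_wordVec, hclass, star_smul, mulVec_smul, smul_dotProduct,
    dotProduct_smul, smul_eq_mul, smul_eq_mul, ← mul_assoc, Complex.star_def,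
    mul_comm _ (wordVec S w₀), Complex.mul_conj, Complex.re_ofReal_mul, Complex.normSq_eq_norm_sq]
  calc ‖wordVec S w₀‖ ^ 2 * (star (typeIndicator (wordType w₀)) ⬝ᵥ ampliation B *ᵥ
        typeIndicator (wordType w₀)).re
      ≤ ‖wordVec S w₀‖ ^ 2
          * (ε * (#(wordTypes (Fin d × Fin d) n) * #(typeClass n (wordType w₀)))) :=
        mul_le_mul_of_nonneg_left (re_star_typeIndicator_dotProduct_mulVec_le hB hdet hn w₀)
          (by positivity)
    _ = _ := by ring

lemma re_trace_conjTranspose_mul_mul_le (hB : B.PosSemidef)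
    (hdet : ∀ ρ, IsDensityMatrix ρ → (B * tensorPow ρ n).trace.re ≤ ε) (hn : 0 < n)
    {S : Matrix (Fin n → Fin d) (Fin n → Fin d) ℂ} (hS : PermInvariant S) :
    (Sᴴ * B * S).trace.re ≤ ε * #(wordTypes (Fin d × Fin d) n) ^ 2 * (Sᴴ * S).trace.re := by
  set m := #(wordTypes (Fin d × Fin d) n)
  set u : (Fin d × Fin d → ℕ) → (Fin n → Fin d × Fin d) → ℂ :=
    fun T => typeIndicator T * wordVec S
  have hdecomp : wordVec S = ∑ T ∈ wordTypes (Fin d × Fin d) n, u T := by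
    ext w
    simp [u, typeIndicator, Finset.sum_apply, wordType_mem_wordTypes w]
  have hpiece : ∀ T ∈ wordTypes (Fin d × Fin d) n, (star (u T) ⬝ᵥ ampliation B *ᵥ u T).re
      ≤ ε * m * ∑ w ∈ typeClass n T, ‖wordVec S w‖ ^ 2 := by
    intro T hT
    obtain ⟨w₀, -, rfl⟩ := mem_image.1 hT
    exact re_star_typeIndicator_mul_wordVec_le hB hdet hn hS w₀
  calc (Sᴴ * B * S).trace.re
      = RCLike.re (star (∑ T ∈ wordTypes (Fin d × Fin d) n, u T) ⬝ᵥ ampliation B *ᵥ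
          ∑ T ∈ wordTypes (Fin d × Fin d) n, u T) := by
        rw [trace_conjTranspose_mul_mul_eq_dotProduct, ← hdecomp]; rfl
    _ ≤ m * ∑ T ∈ wordTypes (Fin d × Fin d) n, (star (u T) ⬝ᵥ ampliation B *ᵥ u T).re :=
        hB.ampliation.re_dotProduct_sum_le _ _
    _ ≤ m * ∑ T ∈ wordTypes (Fin d × Fin d) n, ε * m * ∑ w ∈ typeClass n T, ‖wordVec S w‖ ^ 2 :=
        mul_le_mul_of_nonneg_left (sum_le_sum hpiece) m.cast_nonneg
    _ = ε * m ^ 2 * ∑ T ∈ wordTypes (Fin d × Fin d) n, ∑ w ∈ typeClass n T, ‖wordVec S w‖ ^ 2 := by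
        rw [← mul_sum]; ring
    _ = ε * m ^ 2 * ∑ w, ‖wordVec S w‖ ^ 2 :=
        congrArg _ (sum_fiberwise_of_maps_to (fun w _ => wordType_mem_wordTypes w) _)
    _ = ε * m ^ 2 * (Sᴴ * S).trace.re := by rw [re_trace_conjTranspose_mul_self]

lemma card_wordTypes_sq_le (hd : 1 ≤ d) (hn : 1 ≤ n) :
    #(wordTypes (Fin d × Fin d) n) ^ 2 ≤ (2 * d * n) ^ (4 * d ^ 2) :=
  calc #(wordTypes (Fin d × Fin d) n) ^ 2 ≤ ((n + 1) ^ (d * d)) ^ 2 :=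
        Nat.pow_le_pow_left (card_wordTypes_le.trans_eq (by simp)) 2
    _ = (n + 1) ^ (2 * d ^ 2) := by ring
    _ ≤ (2 * d * n) ^ (2 * d ^ 2) := Nat.pow_le_pow_left (by nlinarith) _
    _ ≤ (2 * d * n) ^ (4 * d ^ 2) := Nat.pow_le_pow_right (by positivity) (by omega)

end Detector

theorem nogo_universal_detector_lower_general (d n : ℕ) (hd : 1 ≤ d) (hn : 1 ≤ n)
    (ε : ℝ) (hε : 0 ≤ ε)
    (A : Matrix (Fin n → Fin d) (Fin n → Fin d) ℂ)
    (hAinv : PermInvariant A)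
    (hA' : ((1 : Matrix (Fin n → Fin d) (Fin n → Fin d) ℂ) - A).PosSemidef)
    (hdetect : ∀ ρ : Matrix (Fin d) (Fin d) ℂ, IsDensityMatrix ρ →
      1 - ε ≤ ((A * tensorPow ρ n).trace).re) :
    (A - (1 - ε * (2 * (d : ℝ) * (n : ℝ)) ^ (4 * d ^ 2)) •
        (1 : Matrix (Fin n → Fin d) (Fin n → Fin d) ℂ)).PosSemidef := by
  set m := #(wordTypes (Fin d × Fin d) n)
  have hdetect' (ρ : Matrix (Fin d) (Fin d) ℂ) (hρ : IsDensityMatrix ρ) :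
      ((1 - A) * tensorPow ρ n).trace.re ≤ ε := by
    rw [Matrix.sub_mul, Matrix.one_mul, trace_sub, trace_tensorPow, hρ.2, one_pow,
      Complex.sub_re, Complex.one_re]
    linarith [hdetect ρ hρ]
  have hle : 1 - A ≤ algebraMap ℝ _ (ε * m ^ 2) :=
    hA'.isHermitian.le_algebraMap_of_forall_cfc fun f =>
      re_trace_conjTranspose_mul_mul_le hA' hdetect' hn (hAinv.one_sub.cfc f)
  have hm : ε * m ^ 2 ≤ ε * (2 * d * n) ^ (4 * d ^ 2) :=
    mul_le_mul_of_nonneg_left (by exact_mod_cast card_wordTypes_sq_le hd hn) hε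
  rw [Matrix.le_iff, Algebra.algebraMap_eq_smul_one] at hle
  have hsplit : A - (1 - ε * (2 * (d : ℝ) * n) ^ (4 * d ^ 2)) • (1 : Matrix _ _ ℂ)
      = ((ε * m ^ 2) • 1 - (1 - A)) + (ε * (2 * d * n) ^ (4 * d ^ 2) - ε * m ^ 2) • 1 := by
    module
  rw [hsplit]
  exact hle.add (PosSemidef.one.smul (sub_nonneg.2 hm))

/-- **No-go theorem for permutation-invariant universal detectors, first part** (Theorem 6). -/
theorem nogo_universal_detector_lower (d n : ℕ) (hd : 1 ≤ d) (hn : 1 ≤ n)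
    (ε : ℝ) (hε : 0 ≤ ε)
    (A : Matrix (Fin n → Fin d) (Fin n → Fin d) ℂ)
    (hAinv : PermInvariant A)
    (hA : A.PosSemidef)
    (hA' : ((1 : Matrix (Fin n → Fin d) (Fin n → Fin d) ℂ) - A).PosSemidef)
    (hdetect : ∀ ρ : Matrix (Fin d) (Fin d) ℂ, IsDensityMatrix ρ →
      1 - ε ≤ ((A * tensorPow ρ n).trace).re) :
    (A - (1 - ε * (2 * (d : ℝ) * (n : ℝ)) ^ (4 * d ^ 2)) •
        (1 : Matrix (Fin n → Fin d) (Fin n → Fin d) ℂ)).PosSemidef :=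
  nogo_universal_detector_lower_general d n hd hn ε hε A hAinv hA' hdetect
end
end
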